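/- arXiv:2303.14775 — 4 statements merged into one kernel-verified Lean document; each statement's English description precedes it below -/
import Mathlib

section
/- Let a ≥ 3, r ≥ 3, g ≥ 0, n ≥ 0 be integers with a dividing r, and let c_1, …, c_n be integers each coprime to a. Suppose there does not exist any μ = (μ_1, …, μ_n) ∈ {±1}^n satisfying the congruences c_1 μ_1 ≡ c_2 μ_2 ≡ ⋯ ≡ c_n μ_n (mod a). Then Z(r, a, g; c_1, …, c_n) = 0. -/
open scoped BigOperators

/-- The simplified exponential sum `Z(r, a, g; c_1, …, c_n)` appearing in Hansen's
formula for the Witten–Reshetikhin–Turaev invariant of a Seifert fiber space. -/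
noncomputable def hansenZ (r a g n : ℕ) (c : Fin n → ℤ) : ℂ :=
  ∑ γ ∈ Finset.Icc 1 (r - 1),
    ∑ μ ∈ Fintype.piFinset fun _ : Fin n => ({-1, 1} : Finset ℤ),
      ((Real.sin (Real.pi * γ / r) ^ (-((n : ℤ) + 2 * g - 2)) : ℝ) : ℂ) *
        Complex.exp (-(Complex.I * (Real.pi : ℂ) * (γ : ℂ) * (∑ j, (μ j : ℂ)) / ((a : ℂ) * r))) *
        (∏ j, (μ j : ℂ)) *
        ∏ j, ∑ m ∈ Finset.range a,
          Complex.exp (-(2 * (Real.pi : ℂ) * Complex.I * ((γ : ℂ) + (c j : ℂ) * (μ j : ℂ)) * (m : ℂ) / a))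

theorem stmt_1 (a r g n : ℕ) (ha : 3 ≤ a) (hr : 3 ≤ r) (hdvd : a ∣ r)
    (c : Fin n → ℤ) (hcop : ∀ j, Int.gcd (c j) a = 1)
    (hno : ¬ ∃ μ : Fin n → ℤ, (∀ j, μ j = 1 ∨ μ j = -1) ∧
      ∀ j j' : Fin n, c j * μ j ≡ c j' * μ j' [ZMOD (a : ℤ)]) :
    hansenZ r a g n c = 0 := by
  unfold hansenZ
  apply Finset.sum_eq_zero
  intro γ hγ
  apply Finset.sum_eq_zero
  intro μ hμ
  have hμpm : ∀ j, μ j = 1 ∨ μ j = -1 := by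
    intro j
    have := (Fintype.mem_piFinset.1 hμ) j
    simp at this
    tauto
  have ha0 : a ≠ 0 := by omega
  have haC : (a : ℂ) ≠ 0 := Nat.cast_ne_zero.2 ha0
  obtain ⟨j, hj⟩ : ∃ j : Fin n, ¬ ((a : ℤ) ∣ ((γ : ℤ) + c j * μ j)) := by
    by_contra hcon
    push_neg at hcon
    refine hno ⟨μ, hμpm, fun j j' => ?_⟩
    have h1 : ∀ j : Fin n, c j * μ j ≡ -(γ : ℤ) [ZMOD (a : ℤ)] := by
      intro j
      refine Int.modEq_iff_dvd.2 ?_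
      have h2 : (-(γ : ℤ)) - c j * μ j = -((γ : ℤ) + c j * μ j) := by ring
      rw [h2]
      exact dvd_neg.2 (hcon j)
    exact (h1 j).trans (h1 j').symm
  set k : ℤ := (γ : ℤ) + c j * μ j with hk
  set z : ℂ := Complex.exp (-(2 * (Real.pi : ℂ) * Complex.I * (k : ℂ) / a)) with hzdef
  have hz : ∀ m : ℕ, Complex.exp (-(2 * (Real.pi : ℂ) * Complex.I * ((γ : ℂ) + (c j : ℂ) * (μ j : ℂ)) * (m : ℂ) / a)) = z ^ m := by
    intro m
    rw [hzdef, ← Complex.exp_nat_mul]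
    congr 1
    rw [hk]
    push_cast
    ring
  have hz1 : z ≠ 1 := by
    intro h
    rw [hzdef, Complex.exp_eq_one_iff] at h
    obtain ⟨t, ht⟩ := h
    apply hj
    have hπ : (Real.pi : ℂ) ≠ 0 := Complex.ofReal_ne_zero.2 Real.pi_ne_zero
    have hI : Complex.I ≠ 0 := Complex.I_ne_zero
    have hne : (2 * (Real.pi : ℂ) * Complex.I) ≠ 0 :=
      mul_ne_zero (mul_ne_zero two_ne_zero hπ) hI
    field_simp at ht
    have h2 : (2 * (Real.pi : ℂ) * Complex.I) * (k : ℂ) =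
        (2 * (Real.pi : ℂ) * Complex.I) * ((-t * a : ℤ) : ℂ) := by
      push_cast
      linear_combination (-(2 * (Real.pi : ℂ) * Complex.I)) * ht
    have h3 : k = -t * a := by exact_mod_cast mul_left_cancel₀ hne h2
    exact ⟨-t, by linarith⟩
  have hza : z ^ a = 1 := by
    rw [hzdef, ← Complex.exp_nat_mul]
    have h4 : (a : ℂ) * (-(2 * (Real.pi : ℂ) * Complex.I * (k : ℂ) / a)) = ((-k : ℤ) : ℂ) * (2 * (Real.pi : ℂ) * Complex.I) := by
      push_cast
      field_simp
    rw [h4, Complex.exp_int_mul_two_pi_mul_I]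
  have hkey : (∑ m ∈ Finset.range a, Complex.exp (-(2 * (Real.pi : ℂ) * Complex.I * ((γ : ℂ) + (c j : ℂ) * (μ j : ℂ)) * (m : ℂ) / a))) = 0 := by
    rw [Finset.sum_congr rfl fun m _ => hz m, geom_sum_eq hz1, hza]
    simp
  have hprod : (∏ j' : Fin n, ∑ m ∈ Finset.range a, Complex.exp (-(2 * (Real.pi : ℂ) * Complex.I * ((γ : ℂ) + (c j' : ℂ) * (μ j' : ℂ)) * (m : ℂ) / a))) = 0 :=
    Finset.prod_eq_zero (Finset.mem_univ j) hkey
  rw [hprod, mul_zero]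
end

section
/- Let g ≥ 0 and n ≥ 0 be integers, let a_1, …, a_n be odd positive integers, and let b_1, …, b_n be integers with b_j coprime to a_j for each j and with b_1/a_1 + ⋯ + b_n/a_n = 0 in ℚ. Let G be the group with generators x_1, y_1, …, x_g, y_g, s_1, …, s_n, f and relations: s_1⋯s_n = [x_1,y_1]⋯[x_g,y_g]; x_i f = f x_i and y_i f = f y_i for i = 1, …, g; s_j f = f s_j for j = 1, …, n; and s_j^{a_j} f^{b_j} = 1 for j = 1, …, n. Then the ℤ/2ℤ-vector space G^{ab} ⊗_ℤ (ℤ/2ℤ) (the abelianization of G tensored with ℤ/2ℤ) has dimension 2g + 1, with basis given by the images of x_1, y_1, …, x_g, y_g, f. -/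
open scoped BigOperators TensorProduct commutatorElement

/-- Generators of the fundamental group of a closed Seifert fiber space with orientable
orbifold base of genus `g`, orientable fibration, and `n` exceptional fibers:
`x_1, y_1, …, x_g, y_g, s_1, …, s_n, f`. -/
inductive SfsGen (g n : ℕ) : Type
  | x (i : Fin g)
  | y (i : Fin g)
  | s (j : Fin n)
  | f

variable {g n : ℕ}

/-- Abbreviations for the free-group generators. -/
def SfsGen.X (i : Fin g) : FreeGroup (SfsGen g n) := FreeGroup.of (SfsGen.x i)

def SfsGen.Y (i : Fin g) : FreeGroup (SfsGen g n) := FreeGroup.of (SfsGen.y i)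

def SfsGen.S (j : Fin n) : FreeGroup (SfsGen g n) := FreeGroup.of (SfsGen.s j)

def SfsGen.F : FreeGroup (SfsGen g n) := FreeGroup.of SfsGen.f

/-- The relations of the standard presentation of the fundamental group of the Seifert
fiber space with symbol `(g; (a_1,b_1), …, (a_n,b_n))`:
`s_1⋯s_n = [x_1,y_1]⋯[x_g,y_g]`, `x_i f = f x_i`, `y_i f = f y_i`, `s_j f = f s_j`,
and `s_j^{a_j} f^{b_j} = 1`. -/
def sfsRels (g n : ℕ) (a : Fin n → ℕ) (b : Fin n → ℤ) : Set (FreeGroup (SfsGen g n)) :=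
  { (List.ofFn fun j : Fin n => SfsGen.S (g := g) j).prod *
      ((List.ofFn fun i : Fin g => ⁅SfsGen.X (n := n) i, SfsGen.Y (n := n) i⁆).prod)⁻¹ }
  ∪ (⋃ i : Fin g, {⁅SfsGen.X (n := n) i, SfsGen.F⁆, ⁅SfsGen.Y (n := n) i, SfsGen.F⁆})
  ∪ (⋃ j : Fin n, {⁅SfsGen.S (g := g) j, SfsGen.F⁆,
      SfsGen.S (g := g) j ^ (a j) * SfsGen.F ^ (b j)})

/-- The group presented by the above generators and relations. -/
abbrev SfsGroup (g n : ℕ) (a : Fin n → ℕ) (b : Fin n → ℤ) : Type :=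
  PresentedGroup (sfsRels g n a b)

/-- The abelianization of `SfsGroup`, tensored with `ℤ/2ℤ` over `ℤ`,
i.e. `G^{ab} ⊗_ℤ (ℤ/2ℤ)`, as a `ℤ/2ℤ`-vector space. -/
abbrev SfsH1Mod2 (g n : ℕ) (a : Fin n → ℕ) (b : Fin n → ℤ) : Type :=
  (ZMod 2) ⊗[ℤ] (Additive (Abelianization (SfsGroup g n a b)))

/-- The image of a generator in `G^{ab} ⊗_ℤ (ℤ/2ℤ)`. -/
noncomputable def sfsImg (g n : ℕ) (a : Fin n → ℕ) (b : Fin n → ℤ) (z : SfsGen g n) :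
    SfsH1Mod2 g n a b :=
  (1 : ZMod 2) ⊗ₜ[ℤ]
    (Additive.ofMul (Abelianization.of (PresentedGroup.of (rels := sfsRels g n a b) z)))

/-! ### Auxiliary definitions and lemmas -/

/-- Index type for the mod-2 homology basis. -/
abbrev SfsIdx (g : ℕ) := Fin g ⊕ Fin g ⊕ Unit

/-- The target `ℤ/2`-vector space. -/
abbrev SfsV (g : ℕ) := SfsIdx g → ZMod 2

/-- The mod-2 abelianized image of each generator, as an explicit vector. -/
def sfsVec (b : Fin n → ℤ) : SfsGen g n → SfsV g
  | .x i => Pi.single (Sum.inl i) 1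
  | .y i => Pi.single (Sum.inr (Sum.inl i)) 1
  | .s j => (b j : ZMod 2) • Pi.single (Sum.inr (Sum.inr ())) 1
  | .f => Pi.single (Sum.inr (Sum.inr ())) 1

/-- The generator corresponding to each basis index. -/
def sfsGenOf : SfsIdx g → SfsGen g n
  | .inl i => .x i
  | .inr (.inl i) => .y i
  | .inr (.inr _) => .f

lemma sfs_int_sum (a : Fin n → ℕ) (b : Fin n → ℤ) (hapos : ∀ j, 0 < a j)
    (hsum : ∑ j, (b j : ℚ) / (a j : ℚ) = 0) :
    ∑ j, b j * ∏ i ∈ Finset.univ.erase j, (a i : ℤ) = 0 := by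
  have ha : ∀ i : Fin n, (a i : ℚ) ≠ 0 := fun i => Nat.cast_ne_zero.mpr (hapos i).ne'
  have h : ((∑ j, b j * ∏ i ∈ Finset.univ.erase j, (a i : ℤ)) : ℚ) = 0 := by
    push_cast
    have key : ∀ j : Fin n, (b j : ℚ) * ∏ i ∈ Finset.univ.erase j, (a i : ℚ)
        = ((b j : ℚ) / (a j : ℚ)) * ∏ i, (a i : ℚ) := by
      intro j
      rw [← Finset.mul_prod_erase _ _ (Finset.mem_univ j), ← mul_assoc,
        div_mul_cancel₀ _ (ha j)]
    rw [Finset.sum_congr rfl fun j _ => key j, ← Finset.sum_mul, hsum, zero_mul]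
  exact_mod_cast h

lemma sfs_odd_cast_nat (a : Fin n → ℕ) (haodd : ∀ j, Odd (a j)) (i : Fin n) :
    ((a i : ZMod 2)) = 1 := by
  obtain ⟨k, hk⟩ := haodd i
  have h2 : (2 : ZMod 2) = 0 := by decide
  push_cast [hk]
  rw [h2]; ring

lemma sfs_odd_cast (a : Fin n → ℕ) (haodd : ∀ j, Odd (a j)) (i : Fin n) :
    ((a i : ℤ) : ZMod 2) = 1 := by
  rw [← sfs_odd_cast_nat a haodd i]
  push_cast
  rfl

lemma sfs_sum_b (a : Fin n → ℕ) (b : Fin n → ℤ) (hapos : ∀ j, 0 < a j)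
    (haodd : ∀ j, Odd (a j)) (hsum : ∑ j, (b j : ℚ) / (a j : ℚ) = 0) :
    ∑ j, ((b j : ZMod 2)) = 0 := by
  have h0 := sfs_int_sum a b hapos hsum
  calc ∑ j, ((b j : ZMod 2))
      = ∑ j, ((b j : ZMod 2) * ∏ i ∈ Finset.univ.erase j, ((a i : ℤ) : ZMod 2)) := by
        refine Finset.sum_congr rfl fun j _ => ?_
        rw [Finset.prod_congr rfl fun i _ => sfs_odd_cast a haodd i,
          Finset.prod_const_one, mul_one]
    _ = ((∑ j, b j * ∏ i ∈ Finset.univ.erase j, (a i : ℤ) : ℤ) : ZMod 2) := by push_cast; rfl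
    _ = 0 := by rw [h0]; exact Int.cast_zero

lemma sfs_rels_hold (a : Fin n → ℕ) (b : Fin n → ℤ) (hapos : ∀ j, 0 < a j)
    (haodd : ∀ j, Odd (a j)) (hsum : ∑ j, (b j : ℚ) / (a j : ℚ) = 0) :
    ∀ r ∈ sfsRels g n a b,
      FreeGroup.lift (fun z => Multiplicative.ofAdd (sfsVec (g := g) b z)) r = 1 := by
  intro r hr
  set φ := FreeGroup.lift (fun z => Multiplicative.ofAdd (sfsVec (g := g) b z)) with hφ
  have hcomm : ∀ u v : FreeGroup (SfsGen g n), φ ⁅u, v⁆ = 1 := fun u v => by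
    rw [map_commutatorElement]
    exact commutatorElement_eq_one_iff_mul_comm.mpr (mul_comm _ _)
  have hS : ∀ j : Fin n, φ (SfsGen.S (g := g) j)
      = Multiplicative.ofAdd ((b j : ZMod 2) • Pi.single (Sum.inr (Sum.inr ())) 1) := fun j => by
    rw [hφ, SfsGen.S, FreeGroup.lift_apply_of]
    rfl
  have hF : φ (SfsGen.F (g := g) (n := n))
      = Multiplicative.ofAdd (Pi.single (Sum.inr (Sum.inr ())) (1 : ZMod 2)) := by
    rw [hφ, SfsGen.F, FreeGroup.lift_apply_of]
    rfl
  rcases hr with (hr | hr) | hr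
  · rw [Set.mem_singleton_iff] at hr
    subst hr
    rw [map_mul, map_inv, map_list_prod, map_list_prod, List.map_ofFn, List.map_ofFn,
      List.prod_ofFn, List.prod_ofFn]
    have h1 : (∏ i : Fin g, (φ ∘ fun i => ⁅SfsGen.X (n := n) i, SfsGen.Y (n := n) i⁆) i) = 1 :=
      Finset.prod_eq_one fun i _ => hcomm _ _
    have h2 : (∏ j : Fin n, (φ ∘ fun j => SfsGen.S (g := g) j) j) = 1 := by
      simp only [Function.comp_apply]
      rw [Finset.prod_congr rfl fun j _ => hS j, ← ofAdd_sum, ← Finset.sum_smul,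
        sfs_sum_b a b hapos haodd hsum, zero_smul, ofAdd_zero]
    rw [h1, h2, inv_one, mul_one]
  · simp only [Set.mem_iUnion, Set.mem_insert_iff, Set.mem_singleton_iff] at hr
    obtain ⟨i, hi | hi⟩ := hr <;> (subst hi; exact hcomm _ _)
  · simp only [Set.mem_iUnion, Set.mem_insert_iff, Set.mem_singleton_iff] at hr
    obtain ⟨j, hj | hj⟩ := hr
    · subst hj; exact hcomm _ _
    · subst hj
      rw [map_mul, map_pow, map_zpow, hS, hF, ← ofAdd_nsmul, ← ofAdd_zsmul, ← ofAdd_add,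
        ofAdd_eq_one, ← Nat.cast_smul_eq_nsmul (ZMod 2), ← Int.cast_smul_eq_zsmul (ZMod 2),
        sfs_odd_cast_nat a haodd j, one_smul, ← add_smul, CharTwo.add_self_eq_zero, zero_smul]

/-- The mod-2 abelianization homomorphism, as an additive map on
`Additive (Abelianization (SfsGroup g n a b))`. -/
noncomputable def sfsPsi (a : Fin n → ℕ) (b : Fin n → ℤ)
    (hrel : ∀ r ∈ sfsRels g n a b,
      FreeGroup.lift (fun z => Multiplicative.ofAdd (sfsVec (g := g) b z)) r = 1) :
    Additive (Abelianization (SfsGroup g n a b)) →+ SfsV g :=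
  MonoidHom.toAdditiveLeft (Abelianization.lift (PresentedGroup.toGroup hrel))

lemma sfsPsi_of (a : Fin n → ℕ) (b : Fin n → ℤ) (hrel : ∀ r ∈ sfsRels g n a b,
      FreeGroup.lift (fun z => Multiplicative.ofAdd (sfsVec (g := g) b z)) r = 1)
    (z : SfsGen g n) :
    sfsPsi a b hrel (Additive.ofMul (Abelianization.of (PresentedGroup.of z))) = sfsVec b z := by
  simp [sfsPsi, PresentedGroup.toGroup.of]

/-- The forward linear map `H₁(M; ℤ/2) → (ℤ/2)^{2g+1}`. -/
noncomputable def sfsL (a : Fin n → ℕ) (b : Fin n → ℤ) (hrel : ∀ r ∈ sfsRels g n a b,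
      FreeGroup.lift (fun z => Multiplicative.ofAdd (sfsVec (g := g) b z)) r = 1) :
    SfsH1Mod2 g n a b →ₗ[ZMod 2] SfsV g :=
  TensorProduct.AlgebraTensorModule.lift
    (LinearMap.toSpanSingleton (ZMod 2) _ (sfsPsi a b hrel).toIntLinearMap)

lemma sfsL_tmul (a : Fin n → ℕ) (b : Fin n → ℤ) (hrel : ∀ r ∈ sfsRels g n a b,
      FreeGroup.lift (fun z => Multiplicative.ofAdd (sfsVec (g := g) b z)) r = 1)
    (r : ZMod 2) (m : Additive (Abelianization (SfsGroup g n a b))) :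
    sfsL a b hrel (r ⊗ₜ m) = r • sfsPsi a b hrel m := by
  simp [sfsL, TensorProduct.AlgebraTensorModule.lift_tmul]

lemma sfsL_img (a : Fin n → ℕ) (b : Fin n → ℤ) (hrel : ∀ r ∈ sfsRels g n a b,
      FreeGroup.lift (fun z => Multiplicative.ofAdd (sfsVec (g := g) b z)) r = 1)
    (z : SfsGen g n) :
    sfsL a b hrel (sfsImg g n a b z) = sfsVec b z := by
  rw [sfsImg, sfsL_tmul, sfsPsi_of, one_smul]

/-- The backward linear map `(ℤ/2)^{2g+1} → H₁(M; ℤ/2)`. -/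
noncomputable def sfsR (a : Fin n → ℕ) (b : Fin n → ℤ) :
    SfsV g →ₗ[ZMod 2] SfsH1Mod2 g n a b :=
  (Pi.basisFun (ZMod 2) (SfsIdx g)).constr (ZMod 2) fun k => sfsImg g n a b (sfsGenOf k)

lemma sfsR_single (a : Fin n → ℕ) (b : Fin n → ℤ) (k : SfsIdx g) :
    sfsR a b (Pi.single k 1) = sfsImg g n a b (sfsGenOf k) := by
  rw [← Pi.basisFun_apply]
  exact Module.Basis.constr_basis _ _ _ _

lemma sfs_pow_rel (a : Fin n → ℕ) (b : Fin n → ℤ) (j : Fin n) :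
    (PresentedGroup.of (rels := sfsRels g n a b) (SfsGen.s j)) ^ (a j) *
      (PresentedGroup.of (rels := sfsRels g n a b) SfsGen.f) ^ (b j) = 1 := by
  have hmem : SfsGen.S (g := g) j ^ a j * SfsGen.F ^ b j ∈ sfsRels g n a b :=
    Set.mem_union_right _ (Set.mem_iUnion.mpr ⟨j, Set.mem_insert_iff.mpr (Or.inr rfl)⟩)
  have h1 : (QuotientGroup.mk (SfsGen.S (g := g) j ^ a j * SfsGen.F ^ b j) :
      PresentedGroup (sfsRels g n a b)) = 1 :=
    (QuotientGroup.eq_one_iff _).mpr (Subgroup.subset_normalClosure hmem)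
  rwa [QuotientGroup.mk_mul, QuotientGroup.mk_pow, QuotientGroup.mk_zpow] at h1

lemma sfs_img_s (a : Fin n → ℕ) (b : Fin n → ℤ) (haodd : ∀ j, Odd (a j)) (j : Fin n) :
    sfsImg g n a b (SfsGen.s j) = (b j : ZMod 2) • sfsImg g n a b SfsGen.f := by
  have h1 := sfs_pow_rel (g := g) a b j
  have h2 := congrArg (Abelianization.of (G := SfsGroup g n a b)) h1
  rw [map_mul, map_pow, map_zpow, map_one] at h2
  have h3 : (a j) • Additive.ofMul (Abelianization.of
        (PresentedGroup.of (rels := sfsRels g n a b) (SfsGen.s j)))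
      + (b j) • Additive.ofMul (Abelianization.of
        (PresentedGroup.of (rels := sfsRels g n a b) SfsGen.f)) = 0 := by
    rw [← ofMul_pow, ← ofMul_zpow, ← ofMul_mul, h2, ofMul_one]
  have h4 := congrArg ((TensorProduct.mk ℤ (ZMod 2)
    (Additive (Abelianization (SfsGroup g n a b)))) 1) h3
  rw [map_add, map_nsmul, map_zsmul, map_zero, ← Nat.cast_smul_eq_nsmul (ZMod 2),
    ← Int.cast_smul_eq_zsmul (ZMod 2), sfs_odd_cast_nat a haodd j, one_smul] at h4
  have h5 := eq_neg_of_add_eq_zero_left h4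
  rw [← neg_smul, CharTwo.neg_eq] at h5
  exact h5

lemma sfs_RL (a : Fin n → ℕ) (b : Fin n → ℤ) (hapos : ∀ j, 0 < a j)
    (haodd : ∀ j, Odd (a j)) (hrel : ∀ r ∈ sfsRels g n a b,
      FreeGroup.lift (fun z => Multiplicative.ofAdd (sfsVec (g := g) b z)) r = 1)
    (t : SfsH1Mod2 g n a b) :
    sfsR a b (sfsL a b hrel t) = t := by
  -- first, on elements of the form `1 ⊗ₜ m`
  have hgen : ∀ z : SfsGen g n, sfsR a b (sfsL a b hrel (sfsImg g n a b z))
      = sfsImg g n a b z := by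
    intro z
    rw [sfsL_img]
    cases z with
    | x i => exact sfsR_single a b (Sum.inl i)
    | y i => exact sfsR_single a b (Sum.inr (Sum.inl i))
    | f => exact sfsR_single a b (Sum.inr (Sum.inr ()))
    | s j =>
        show sfsR a b ((b j : ZMod 2) • Pi.single (Sum.inr (Sum.inr ())) 1) = _
        rw [map_smul, sfsR_single a b (Sum.inr (Sum.inr ()))]
        exact (sfs_img_s a b haodd j).symm
  have key : ∀ m : Additive (Abelianization (SfsGroup g n a b)),
      sfsR a b (sfsL a b hrel ((1 : ZMod 2) ⊗ₜ m)) = (1 : ZMod 2) ⊗ₜ m := by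
    set N := Additive (Abelianization (SfsGroup g n a b))
    set θ : N →ₗ[ℤ] SfsH1Mod2 g n a b := (TensorProduct.mk ℤ (ZMod 2) N) 1 with hθ
    set comp : N →ₗ[ℤ] SfsH1Mod2 g n a b :=
      ((((sfsR (g := g) a b).comp (sfsL a b hrel)).restrictScalars ℤ).comp θ) with hcompdef
    have hhom : AddMonoidHom.toMultiplicativeRight comp.toAddMonoidHom
        = AddMonoidHom.toMultiplicativeRight θ.toAddMonoidHom := by
      apply Abelianization.hom_ext
      apply PresentedGroup.ext
      intro z
      show Multiplicative.ofAdd (comp (Additive.ofMul (Abelianization.of (PresentedGroup.of z))))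
        = Multiplicative.ofAdd (θ (Additive.ofMul (Abelianization.of (PresentedGroup.of z))))
      congr 1
      exact hgen z
    intro m
    have := congrArg (fun ψ => (ψ (Additive.toMul m) : Multiplicative (SfsH1Mod2 g n a b))) hhom
    have h2 : comp m = θ m := by simpa using this
    exact h2
  induction t using TensorProduct.induction_on with
  | zero => simp
  | tmul r m =>
      have : r ⊗ₜ[ℤ] m = r • ((1 : ZMod 2) ⊗ₜ[ℤ] m) := by
        rw [TensorProduct.smul_tmul', smul_eq_mul, mul_one]
      rw [this, map_smul, map_smul, key]
  | add u v hu hv => rw [map_add, map_add, hu, hv]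

lemma sfs_LR (a : Fin n → ℕ) (b : Fin n → ℤ) (hrel : ∀ r ∈ sfsRels g n a b,
      FreeGroup.lift (fun z => Multiplicative.ofAdd (sfsVec (g := g) b z)) r = 1) :
    (sfsL a b hrel).comp (sfsR (g := g) a b) = LinearMap.id := by
  refine Module.Basis.ext (Pi.basisFun (ZMod 2) (SfsIdx g)) fun k => ?_
  rw [LinearMap.comp_apply, LinearMap.id_apply, Pi.basisFun_apply, sfsR_single, sfsL_img]
  cases k with
  | inl i => rfl
  | inr k => cases k with
    | inl i => rfl
    | inr u => cases u; rfl

theorem stmt_8 (g n : ℕ) (a : Fin n → ℕ) (b : Fin n → ℤ)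
    (hapos : ∀ j, 0 < a j) (haodd : ∀ j, Odd (a j))
    (hcop : ∀ j, Int.gcd (b j) (a j) = 1)
    (hsum : ∑ j, (b j : ℚ) / (a j : ℚ) = 0) :
    Module.finrank (ZMod 2) (SfsH1Mod2 g n a b) = 2 * g + 1 ∧
    ∃ B : Module.Basis (Fin g ⊕ Fin g ⊕ Unit) (ZMod 2) (SfsH1Mod2 g n a b),
      (∀ i : Fin g, B (Sum.inl i) = sfsImg g n a b (SfsGen.x i)) ∧
      (∀ i : Fin g, B (Sum.inr (Sum.inl i)) = sfsImg g n a b (SfsGen.y i)) ∧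
      B (Sum.inr (Sum.inr ())) = sfsImg g n a b SfsGen.f := by
  have hrel := sfs_rels_hold (g := g) a b hapos haodd hsum
  have hRL : (sfsR (g := g) a b).comp (sfsL a b hrel) = LinearMap.id :=
    LinearMap.ext fun t => sfs_RL a b hapos haodd hrel t
  let E : SfsV g ≃ₗ[ZMod 2] SfsH1Mod2 g n a b :=
    LinearEquiv.ofLinear (sfsR (g := g) a b) (sfsL a b hrel) hRL (sfs_LR a b hrel)
  let B : Module.Basis (SfsIdx g) (ZMod 2) (SfsH1Mod2 g n a b) :=
    (Pi.basisFun (ZMod 2) (SfsIdx g)).map E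
  have hB : ∀ k : SfsIdx g, B k = sfsImg g n a b (sfsGenOf k) := by
    intro k
    show E ((Pi.basisFun (ZMod 2) (SfsIdx g)) k) = _
    rw [Pi.basisFun_apply]
    exact sfsR_single a b k
  constructor
  · rw [Module.finrank_eq_card_basis B]
    simp [Fintype.card_sum]
    omega
  · exact ⟨B, fun i => hB (Sum.inl i), fun i => hB (Sum.inr (Sum.inl i)),
      hB (Sum.inr (Sum.inr ()))⟩
end

section
/- Let r ≥ 3 be an integer and s be an integer coprime to r. Let i, j, k be nonnegative integers forming an admissible triple at level r-2, i.e., i + j + k is even and, with S = (i+j+k)/2, the numbers S - i, S - j, S - k are all ≥ 0 and S ≤ r - 2. Then (i² + j² + k²)/2 is an integer and ([S-i]!_{r,s} · [S-j]!_{r,s} · [S-k]!_{r,s}) / [S+1]!_{r,s} = (-1)^{(i²+j²+k²)/2} · ([S-i]!_{r,r-s} · [S-j]!_{r,r-s} · [S-k]!_{r,r-s}) / [S+1]!_{r,r-s}. -/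
open scoped BigOperators

/-- The quantum integer `[w]_{r,s} = sin(πsw/r)/sin(πs/r)`. -/
noncomputable def qint (r : ℕ) (s : ℤ) (w : ℤ) : ℝ :=
  Real.sin (Real.pi * s * w / r) / Real.sin (Real.pi * s / r)

/-- The quantum factorial `[n]!_{r,s} = ∏_{w=1}^n [w]_{r,s}` (empty product `= 1`). -/
noncomputable def qfact (r : ℕ) (s : ℤ) (n : ℕ) : ℝ :=
  ∏ w ∈ Finset.Icc 1 n, qint r s (w : ℤ)

lemma qint_flip (r : ℕ) (hr : r ≠ 0) (s : ℤ) (w : ℕ) :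
    qint r ((r : ℤ) - s) (w : ℤ) = (-1 : ℝ) ^ (w + 1) * qint r s (w : ℤ) := by
  have hr0 : (r : ℝ) ≠ 0 := Nat.cast_ne_zero.mpr hr
  unfold qint
  have h1 : Real.pi * ((r : ℤ) - s) * (w : ℤ) / r = (w : ℕ) * Real.pi - Real.pi * s * w / r := by
    push_cast
    field_simp
  have h2 : Real.pi * ((r : ℤ) - s) / r = Real.pi - Real.pi * s / r := by
    push_cast
    field_simp
  push_cast at h1 h2 ⊢
  rw [h1, h2, Real.sin_nat_mul_pi_sub, Real.sin_pi_sub]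
  simp [pow_succ]
  ring

lemma qfact_flip (r : ℕ) (hr : r ≠ 0) (s : ℤ) (n : ℕ) :
    qfact r ((r : ℤ) - s) n
      = (-1 : ℝ) ^ (∑ w ∈ Finset.Icc 1 n, (w + 1)) * qfact r s n := by
  unfold qfact
  rw [← Finset.prod_pow_eq_pow_sum, ← Finset.prod_mul_distrib]
  exact Finset.prod_congr rfl fun w _ => qint_flip r hr s w

lemma gauss (n : ℕ) : 2 * (∑ w ∈ Finset.Icc 1 n, (w + 1)) = n * (n + 3) := by
  induction n with
  | zero => simp
  | succ n ih =>
    rw [Finset.sum_Icc_succ_top (by omega), Nat.mul_add, ih]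
    ring

lemma sign_div (p q u v : ℕ) (A B C D : ℝ) :
    ((-1 : ℝ) ^ p * A) * ((-1 : ℝ) ^ q * B) * ((-1 : ℝ) ^ u * C) / ((-1 : ℝ) ^ v * D)
      = (-1 : ℝ) ^ (p + q + u + v) * (A * B * C / D) := by
  have hv : ((-1 : ℝ) ^ v)⁻¹ = (-1 : ℝ) ^ v := by
    rw [← inv_pow]; norm_num
  rw [div_eq_mul_inv, mul_inv, hv, div_eq_mul_inv, pow_add, pow_add, pow_add]
  ring

theorem stmt_11 (r : ℕ) (hr : 3 ≤ r) (s : ℤ) (hs : Int.gcd s r = 1)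
    (i j k S : ℕ) (hS : 2 * S = i + j + k)
    (hi : i ≤ S) (hj : j ≤ S) (hk : k ≤ S) (hSr : S ≤ r - 2) :
    Even (i ^ 2 + j ^ 2 + k ^ 2) ∧
      qfact r s (S - i) * qfact r s (S - j) * qfact r s (S - k) / qfact r s (S + 1)
        = (-1 : ℝ) ^ ((i ^ 2 + j ^ 2 + k ^ 2) / 2) *
          (qfact r ((r : ℤ) - s) (S - i) * qfact r ((r : ℤ) - s) (S - j) *
            qfact r ((r : ℤ) - s) (S - k) / qfact r ((r : ℤ) - s) (S + 1)) := by
  have hr0 : r ≠ 0 := by omega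
  have hQ : Even (i ^ 2 + j ^ 2 + k ^ 2) := by
    have : Even (i + j + k) := ⟨S, by omega⟩
    rcases Nat.even_or_odd i with hpi | hpi <;>
    rcases Nat.even_or_odd j with hpj | hpj <;>
    rcases Nat.even_or_odd k with hpk | hpk <;>
      simp [Nat.even_add, Nat.even_pow, parity_simps, hpi, hpj, hpk] at this ⊢ <;>
      tauto
  refine ⟨hQ, ?_⟩
  obtain ⟨q, hq⟩ := hQ
  set Pa := ∑ w ∈ Finset.Icc 1 (S - i), (w + 1) with hPa
  set Pb := ∑ w ∈ Finset.Icc 1 (S - j), (w + 1) with hPb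
  set Pc := ∑ w ∈ Finset.Icc 1 (S - k), (w + 1) with hPc
  set Pd := ∑ w ∈ Finset.Icc 1 (S + 1), (w + 1) with hPd
  rw [qfact_flip r hr0, qfact_flip r hr0, qfact_flip r hr0, qfact_flip r hr0,
    ← hPa, ← hPb, ← hPc, ← hPd, sign_div, ← mul_assoc, ← pow_add]
  have hE : (i ^ 2 + j ^ 2 + k ^ 2) / 2 = q := by omega
  rw [hE]
  have key : Even (q + (Pa + Pb + Pc + Pd)) := by
    have ga := gauss (S - i)
    have gb := gauss (S - j)
    have gc := gauss (S - k)
    have gd := gauss (S + 1)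
    have hsum : (S - i) * (S - i + 3) + (S - j) * (S - j + 3) + (S - k) * (S - k + 3)
        + (S + 1) * (S + 1 + 3) = 2 * q + 8 * S + 4 := by
      have h1 : S - i + i = S := by omega
      have h2 : S - j + j = S := by omega
      have h3 : S - k + k = S := by omega
      zify [hi, hj, hk] at *
      nlinarith [hS, hq]
    refine ⟨q + 2 * S + 1, by omega⟩
  rw [key.neg_one_pow, one_mul]
end

section
/- Let r ≥ 3 be an integer and s be an integer coprime to r. Let i, j, k, l, m, n be nonnegative integers such that each of the four triples (i,j,k), (i,m,n), (j,l,n), (k,l,m) is admissible at level r-2 (i.e., for each triple the sum of its entries is even, its half-sum minus each entry is ≥ 0, and its half-sum is ≤ r-2). Set T_1 = (i+j+k)/2, T_2 = (i+m+n)/2, T_3 = (j+l+n)/2, T_4 = (k+l+m)/2, Q_1 = (i+j+l+m)/2, Q_2 = (i+k+l+n)/2, Q_3 = (j+k+m+n)/2, and define |t|_{r,s} = ∑_{z = max_a T_a}^{min_b Q_b} (-1)^z · [z+1]!_{r,s} / ( ∏_{a=1}^{4} [z - T_a]!_{r,s} · ∏_{b=1}^{3} [Q_b - z]!_{r,s}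 ). Then il + jm + kn is even and |t|_{r,s} = (-1)^{i+j+k+l+m+n+(il+jm+kn)/2} · |t|_{r,r-s}. -/
open scoped BigOperators

/-- The tetrahedron weight `|t|_{r,s}` of the Turaev–Viro state sum, for a tetrahedron
with triple half-sums `T₁, T₂, T₃, T₄` and quadruple half-sums `Q₁, Q₂, Q₃`. -/
noncomputable def tetWeight (r : ℕ) (s : ℤ) (T₁ T₂ T₃ T₄ Q₁ Q₂ Q₃ : ℕ) : ℝ :=
  ∑ z ∈ Finset.Icc (max (max T₁ T₂) (max T₃ T₄)) (min Q₁ (min Q₂ Q₃)),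
    (-1 : ℝ) ^ z * qfact r s (z + 1) /
      ((qfact r s (z - T₁) * qfact r s (z - T₂) * qfact r s (z - T₃) * qfact r s (z - T₄)) *
        (qfact r s (Q₁ - z) * qfact r s (Q₂ - z) * qfact r s (Q₃ - z)))

/-- Half of `u*(u+3)` is exact. -/
lemma half_spec (u : ℕ) : 2 * (u * (u + 3) / 2) = u * (u + 3) := by
  apply Nat.mul_div_cancel'
  rcases Nat.even_or_odd u with h | h
  · exact Dvd.dvd.mul_right h.two_dvd _
  · refine Dvd.dvd.mul_left ?_ _
    rw [Nat.odd_iff] at h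
    omega

lemma neg_one_pow_congr' {a b : ℕ} (h : a % 2 = b % 2) : (-1 : ℝ) ^ a = (-1 : ℝ) ^ b := by
  conv_lhs => rw [← Nat.div_add_mod a 2]
  conv_rhs => rw [← Nat.div_add_mod b 2]
  rw [h, pow_add, pow_add, pow_mul, pow_mul]
  norm_num

lemma even_of_int {a b : ℕ} (M : ℤ) (h : (a : ℤ) = b + 2 * M) : Even (b + a) := by
  rw [Nat.even_iff]; omega

/-- The complementary quantum integer picks up a sign. -/
lemma qint_compl {r : ℕ} (hr : (r : ℝ) ≠ 0) (s : ℤ) (w : ℕ) :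
    qint r ((r : ℤ) - s) (w : ℤ) = (-1 : ℝ) ^ (w + 1) * qint r s (w : ℤ) := by
  unfold qint
  have h1 : Real.pi * (((r : ℤ) - s : ℤ) : ℝ) * (((w : ℕ) : ℤ) : ℝ) / (r : ℝ)
      = (w : ℝ) * Real.pi - Real.pi * (s : ℝ) * (((w : ℕ) : ℤ) : ℝ) / (r : ℝ) := by
    push_cast
    field_simp
  have h2 : Real.pi * (((r : ℤ) - s : ℤ) : ℝ) / (r : ℝ)
      = Real.pi - Real.pi * (s : ℝ) / (r : ℝ) := by
    push_cast
    field_simp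
  rw [h1, h2, Real.sin_pi_sub, Real.sin_nat_mul_pi_sub]
  rw [pow_succ]
  ring

/-- The complementary quantum factorial picks up a sign. -/
lemma qfact_compl {r : ℕ} (hr : (r : ℝ) ≠ 0) (s : ℤ) (n : ℕ) :
    qfact r ((r : ℤ) - s) n = (-1 : ℝ) ^ (n * (n + 3) / 2) * qfact r s n := by
  induction n with
  | zero => simp [qfact]
  | succ p ih =>
    have h1 : qfact r ((r : ℤ) - s) (p + 1)
        = qfact r ((r : ℤ) - s) p * qint r ((r : ℤ) - s) ((p + 1 : ℕ) : ℤ) :=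
      Finset.prod_Icc_succ_top (by omega) _
    have h2 : qfact r s (p + 1) = qfact r s p * qint r s ((p + 1 : ℕ) : ℤ) :=
      Finset.prod_Icc_succ_top (by omega) _
    rw [h1, h2, ih, qint_compl hr]
    have hp : ((-1 : ℝ)) ^ ((p + 1) * (p + 1 + 3) / 2)
        = (-1 : ℝ) ^ (p * (p + 3) / 2) * (-1 : ℝ) ^ (p + 1 + 1) := by
      rw [← pow_add]
      apply neg_one_pow_congr'
      have e1 : 2 * (p * (p + 3) / 2) = p * (p + 3) := half_spec p
      have e2 : 2 * ((p + 1) * (p + 1 + 3) / 2) = (p + 1) * (p + 1 + 3) := half_spec (p + 1)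
      have e3 : (p + 1) * (p + 1 + 3) = p * (p + 3) + 2 * p + 4 := by ring
      obtain ⟨a, ha⟩ : ∃ a, p * (p + 3) = a := ⟨_, rfl⟩
      obtain ⟨b, hb⟩ : ∃ b, (p + 1) * (p + 1 + 3) = b := ⟨_, rfl⟩
      rw [ha] at e1 e3
      rw [hb] at e2 e3
      rw [ha, hb]
      omega
    rw [hp]
    ring

/-- Pull the signs out of a quotient of signed factors. -/
lemma sign_div_s12 (K e0 e1 e2 e3 e4 e5 e6 e7 : ℕ) (zc N F1 F2 F3 F4 F5 F6 F7 : ℝ)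
    (h : Even (K + (e0 + e1 + e2 + e3 + e4 + e5 + e6 + e7))) :
    zc * N / ((F1 * F2 * F3 * F4) * (F5 * F6 * F7))
      = (-1 : ℝ) ^ K * (zc * ((-1 : ℝ) ^ e0 * N) /
          ((((-1 : ℝ) ^ e1 * F1) * ((-1 : ℝ) ^ e2 * F2) * ((-1 : ℝ) ^ e3 * F3) *
              ((-1 : ℝ) ^ e4 * F4)) *
            (((-1 : ℝ) ^ e5 * F5) * ((-1 : ℝ) ^ e6 * F6) * ((-1 : ℝ) ^ e7 * F7)))) := by
  have hd : (((-1 : ℝ) ^ e1 * F1) * ((-1 : ℝ) ^ e2 * F2) * ((-1 : ℝ) ^ e3 * F3) *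
        ((-1 : ℝ) ^ e4 * F4)) *
      (((-1 : ℝ) ^ e5 * F5) * ((-1 : ℝ) ^ e6 * F6) * ((-1 : ℝ) ^ e7 * F7))
      = (-1 : ℝ) ^ (e1 + e2 + e3 + e4 + e5 + e6 + e7) * ((F1 * F2 * F3 * F4) * (F5 * F6 * F7)) := by
    simp only [pow_add]
    ring
  have key : ∀ (a d : ℝ) (e : ℕ), a / ((-1 : ℝ) ^ e * d) = (-1 : ℝ) ^ e * (a / d) := by
    intro a d e
    rw [div_eq_mul_inv, mul_inv, ← inv_pow, inv_neg, inv_one, div_eq_mul_inv]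
    ring
  have hone : (-1 : ℝ) ^ K * (-1 : ℝ) ^ (e1 + e2 + e3 + e4 + e5 + e6 + e7) * (-1 : ℝ) ^ e0
      = 1 := by
    rw [← pow_add, ← pow_add]
    refine Even.neg_one_pow ?_
    rw [Nat.even_iff] at h ⊢
    omega
  have expand : (-1 : ℝ) ^ K * ((-1 : ℝ) ^ (e1 + e2 + e3 + e4 + e5 + e6 + e7) *
        (zc * ((-1 : ℝ) ^ e0 * N) / ((F1 * F2 * F3 * F4) * (F5 * F6 * F7))))
      = ((-1 : ℝ) ^ K * (-1 : ℝ) ^ (e1 + e2 + e3 + e4 + e5 + e6 + e7) * (-1 : ℝ) ^ e0) *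
        (zc * N / ((F1 * F2 * F3 * F4) * (F5 * F6 * F7))) := by
    rw [div_eq_mul_inv, div_eq_mul_inv]
    ring
  rw [hd, key, expand, hone, one_mul]

theorem stmt_12 (r : ℕ) (hr : 3 ≤ r) (s : ℤ) (hs : Int.gcd s r = 1)
    (i j k l m n : ℕ) (T₁ T₂ T₃ T₄ Q₁ Q₂ Q₃ : ℕ)
    (hT₁ : 2 * T₁ = i + j + k) (hT₂ : 2 * T₂ = i + m + n)
    (hT₃ : 2 * T₃ = j + l + n) (hT₄ : 2 * T₄ = k + l + m)
    (hQ₁ : 2 * Q₁ = i + j + l + m) (hQ₂ : 2 * Q₂ = i + k + l + n)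
    (hQ₃ : 2 * Q₃ = j + k + m + n)
    (hadm₁ : i ≤ T₁ ∧ j ≤ T₁ ∧ k ≤ T₁ ∧ T₁ ≤ r - 2)
    (hadm₂ : i ≤ T₂ ∧ m ≤ T₂ ∧ n ≤ T₂ ∧ T₂ ≤ r - 2)
    (hadm₃ : j ≤ T₃ ∧ l ≤ T₃ ∧ n ≤ T₃ ∧ T₃ ≤ r - 2)
    (hadm₄ : k ≤ T₄ ∧ l ≤ T₄ ∧ m ≤ T₄ ∧ T₄ ≤ r - 2) :
    Even (i * l + j * m + k * n) ∧
      tetWeight r s T₁ T₂ T₃ T₄ Q₁ Q₂ Q₃ =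
        (-1 : ℝ) ^ (i + j + k + l + m + n + (i * l + j * m + k * n) / 2) *
          tetWeight r ((r : ℤ) - s) T₁ T₂ T₃ T₄ Q₁ Q₂ Q₃ := by
  have hr0 : (r : ℝ) ≠ 0 := Nat.cast_ne_zero.mpr (by omega)
  have hi : (i : ℤ) = (T₁ : ℤ) + (T₂ : ℤ) - (Q₃ : ℤ) := by omega
  have hj : (j : ℤ) = (T₁ : ℤ) + (T₃ : ℤ) - (Q₂ : ℤ) := by omega
  have hk : (k : ℤ) = (T₁ : ℤ) + (T₄ : ℤ) - (Q₁ : ℤ) := by omega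
  have hl : (l : ℤ) = (T₃ : ℤ) + (T₄ : ℤ) - (Q₃ : ℤ) := by omega
  have hm : (m : ℤ) = (T₂ : ℤ) + (T₄ : ℤ) - (Q₂ : ℤ) := by omega
  have hn : (n : ℤ) = (T₂ : ℤ) + (T₃ : ℤ) - (Q₁ : ℤ) := by omega
  have hQ3 : (Q₃ : ℤ) = (T₁ : ℤ) + (T₂ : ℤ) + (T₃ : ℤ) + (T₄ : ℤ) - (Q₁ : ℤ) - (Q₂ : ℤ) := by
    omega
  have hPevenZ : Even ((i : ℤ) * l + (j : ℤ) * m + (k : ℤ) * n) := by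
    refine ⟨(Q₂ : ℤ) * Q₂ + (Q₁ : ℤ) * Q₂ + (Q₁ : ℤ) * Q₁ - (T₄ : ℤ) * Q₂ - (T₄ : ℤ) * Q₁
      - (T₃ : ℤ) * Q₂ - (T₃ : ℤ) * Q₁ + (T₃ : ℤ) * T₄ - (T₂ : ℤ) * Q₂ - (T₂ : ℤ) * Q₁
      + (T₂ : ℤ) * T₄ + (T₂ : ℤ) * T₃ - (T₁ : ℤ) * Q₂ - (T₁ : ℤ) * Q₁ + (T₁ : ℤ) * T₄
      + (T₁ : ℤ) * T₃ + (T₁ : ℤ) * T₂, ?_⟩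
    rw [hi, hj, hk, hl, hm, hn, hQ3]
    ring
  have hPeven : Even (i * l + j * m + k * n) := by
    have h' : Even (((i * l + j * m + k * n : ℕ) : ℤ)) := by push_cast; exact hPevenZ
    exact_mod_cast h'
  refine ⟨hPeven, ?_⟩
  have cP : (2 : ℤ) * (((i : ℤ) * l + (j : ℤ) * m + (k : ℤ) * n) / 2)
      = (i : ℤ) * l + (j : ℤ) * m + (k : ℤ) * n :=
    Int.two_mul_ediv_two_of_even hPevenZ
  unfold tetWeight
  rw [Finset.mul_sum]
  refine Finset.sum_congr rfl (fun z hz => ?_)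
  simp only [Finset.mem_Icc] at hz
  have hzT1 : T₁ ≤ z := by omega
  have hzT2 : T₂ ≤ z := by omega
  have hzT3 : T₃ ≤ z := by omega
  have hzT4 : T₄ ≤ z := by omega
  have hzQ1 : z ≤ Q₁ := by omega
  have hzQ2 : z ≤ Q₂ := by omega
  have hzQ3 : z ≤ Q₃ := by omega
  have c0 := half_spec (z + 1)
  zify at c0
  have c1 := half_spec (z - T₁)
  zify [hzT1] at c1
  have c2 := half_spec (z - T₂)
  zify [hzT2] at c2
  have c3 := half_spec (z - T₃)
  zify [hzT3] at c3
  have c4 := half_spec (z - T₄)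
  zify [hzT4] at c4
  have c5 := half_spec (Q₁ - z)
  zify [hzQ1] at c5
  have c6 := half_spec (Q₂ - z)
  zify [hzQ2] at c6
  have c7 := half_spec (Q₃ - z)
  zify [hzQ3] at c7
  have hWe : Even (((T₁ : ℤ) - 1) * T₁ + ((T₂ : ℤ) - 1) * T₂ + ((T₃ : ℤ) - 1) * T₃
      + ((T₄ : ℤ) - 1) * T₄) := by
    have he : ∀ t : ℤ, Even ((t - 1) * t) := fun t => by
      have h := Int.even_mul_succ_self (t - 1)
      have h2 : (t - 1) * (t - 1 + 1) = (t - 1) * t := by ring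
      rwa [h2] at h
    exact (((he T₁).add (he T₂)).add (he T₃)).add (he T₄)
  obtain ⟨w', hw'⟩ := hWe
  have hBig : ((z : ℤ) + 1) * ((z : ℤ) + 1 + 3)
        + ((z : ℤ) - T₁) * ((z : ℤ) - T₁ + 3) + ((z : ℤ) - T₂) * ((z : ℤ) - T₂ + 3)
        + ((z : ℤ) - T₃) * ((z : ℤ) - T₃ + 3) + ((z : ℤ) - T₄) * ((z : ℤ) - T₄ + 3)
        + ((Q₁ : ℤ) - z) * ((Q₁ : ℤ) - z + 3) + ((Q₂ : ℤ) - z) * ((Q₂ : ℤ) - z + 3)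
        + ((Q₃ : ℤ) - z) * ((Q₃ : ℤ) - z + 3)
      = 2 * ((i : ℤ) + j + k + l + m + n) + ((i : ℤ) * l + (j : ℤ) * m + (k : ℤ) * n)
        + 4 * (1 + 2 * (z : ℤ) - (z : ℤ) * T₄ - (z : ℤ) * T₃ - (z : ℤ) * T₂ - (z : ℤ) * T₁
            + 2 * (z : ℤ) * (z : ℤ))
        + 2 * (((T₁ : ℤ) - 1) * T₁ + ((T₂ : ℤ) - 1) * T₂ + ((T₃ : ℤ) - 1) * T₃
            + ((T₄ : ℤ) - 1) * T₄) := by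
    rw [hi, hj, hk, hl, hm, hn, hQ3]
    ring
  have hKey : (((z + 1) * (z + 1 + 3) / 2 + (z - T₁) * (z - T₁ + 3) / 2
        + (z - T₂) * (z - T₂ + 3) / 2 + (z - T₃) * (z - T₃ + 3) / 2
        + (z - T₄) * (z - T₄ + 3) / 2 + (Q₁ - z) * (Q₁ - z + 3) / 2
        + (Q₂ - z) * (Q₂ - z + 3) / 2 + (Q₃ - z) * (Q₃ - z + 3) / 2 : ℕ) : ℤ)
      = ((i + j + k + l + m + n + (i * l + j * m + k * n) / 2 : ℕ) : ℤ)
        + 2 * ((1 + 2 * (z : ℤ) - (z : ℤ) * T₄ - (z : ℤ) * T₃ - (z : ℤ) * T₂ - (z : ℤ) * T₁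
            + 2 * (z : ℤ) * (z : ℤ)) + w') := by
    push_cast [hzT1, hzT2, hzT3, hzT4, hzQ1, hzQ2, hzQ3]
    linarith [c0, c1, c2, c3, c4, c5, c6, c7, hBig, cP, hw']
  have hpar := even_of_int _ hKey
  simp only [qfact_compl hr0]
  exact sign_div_s12 _ _ _ _ _ _ _ _ _ _ _ _ _ _ _ _ _ _ hpar
end
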